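/- arXiv:1409.5606 — 2 statements merged into one kernel-verified Lean document; each statement's English description precedes it below -/
import Mathlib

section
/- Let y = Φx + v with x K-sparse with support T. Then ρ := max_{j∈T} |φ_j' y| satisfies ρ ≥ (1/√K)[(1 − δ_K)‖x_T‖₂ − √(1+δ_K)‖v‖₂]. -/
open Matrix Finset

noncomputable def l2 {n : Type*} [Fintype n] (x : n → ℝ) : ℝ :=
  Real.sqrt (∑ i, (x i) ^ 2)

def Sparse {N : ℕ} (K : ℕ) (x : Fin N → ℝ) : Prop :=
  (Finset.univ.filter (fun i => x i ≠ 0)).card ≤ K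

def RIP {M N : ℕ} (Φ : Matrix (Fin M) (Fin N) ℝ) (K : ℕ) (δ : ℝ) : Prop :=
  ∀ x : Fin N → ℝ, Sparse K x →
    (1 - δ) * (l2 x) ^ 2 ≤ (l2 (Φ.mulVec x)) ^ 2 ∧
    (l2 (Φ.mulVec x)) ^ 2 ≤ (1 + δ) * (l2 x) ^ 2

def colSub {M N : ℕ} (Φ : Matrix (Fin M) (Fin N) ℝ) (S : Finset (Fin N)) :
    Matrix (Fin M) {i // i ∈ S} ℝ := fun r c => Φ r c.1

noncomputable def resid {M N : ℕ} (Φ : Matrix (Fin M) (Fin N) ℝ) (S : Finset (Fin N))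
    (y : Fin M → ℝ) : Fin M → ℝ :=
  y - (colSub Φ S).mulVec
    ((((colSub Φ S)ᵀ * colSub Φ S)⁻¹).mulVec ((colSub Φ S)ᵀ.mulVec y))

def restr {N : ℕ} (x : Fin N → ℝ) (S : Finset (Fin N)) : {i // i ∈ S} → ℝ :=
  fun i => x i.1

/-! On the support, `Φ_Tᵀ y = Φ_Tᵀ Φ_T x_T + Φ_Tᵀ v`. The lower RIP bound and Cauchy–Schwarz give
`‖Φ_Tᵀ Φ_T x_T‖₂ ≥ (1 - δ)‖x_T‖₂`, the upper RIP bound applied to `Φ_Tᵀ v` gives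
`‖Φ_Tᵀ v‖₂ ≤ √(1 + δ)‖v‖₂`, and the largest of the `K` entries of `Φ_Tᵀ y` is at least its
Euclidean norm divided by `√K`. -/

section l2

variable {ι : Type*} [Fintype ι]

lemma l2_eq_norm_toLp (f : ι → ℝ) : l2 f = ‖WithLp.toLp 2 f‖ := by
  simp [l2, EuclideanSpace.norm_eq]

lemma l2_nonneg (f : ι → ℝ) : 0 ≤ l2 f := Real.sqrt_nonneg _

lemma dotProduct_le_l2_mul_l2 (f g : ι → ℝ) : f ⬝ᵥ g ≤ l2 f * l2 g := by
  simpa [l2_eq_norm_toLp, EuclideanSpace.inner_toLp_toLp, dotProduct_comm]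
    using real_inner_le_norm (WithLp.toLp 2 f) (WithLp.toLp 2 g)

lemma dotProduct_self_eq_l2_sq (f : ι → ℝ) : f ⬝ᵥ f = l2 f ^ 2 := by
  rw [l2_eq_norm_toLp, ← real_inner_self_eq_norm_sq]
  rfl

lemma l2_sub_l2_le_l2_add (f g : ι → ℝ) : l2 f - l2 g ≤ l2 (f + g) := by
  simpa [l2_eq_norm_toLp] using norm_sub_le_norm_add (WithLp.toLp 2 f) (WithLp.toLp 2 g)

lemma exists_l2_le_sqrt_card_mul_abs [Nonempty ι] (f : ι → ℝ) :
    ∃ i, l2 f ≤ √(Fintype.card ι) * |f i| := by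
  obtain ⟨i, -, hi⟩ := Finset.exists_max_image Finset.univ (fun i => |f i|) Finset.univ_nonempty
  refine ⟨i, ?_⟩
  rw [l2, ← Real.sqrt_sq (abs_nonneg (f i)), ← Real.sqrt_mul (Nat.cast_nonneg _)]
  refine Real.sqrt_le_sqrt ?_
  calc ∑ j, f j ^ 2 ≤ ∑ _j : ι, |f i| ^ 2 :=
        Finset.sum_le_sum fun j _ => sq_le_sq.mpr (by simpa using hi j (Finset.mem_univ j))
    _ = Fintype.card ι * |f i| ^ 2 := by simp

end l2

section transpose

variable {m n : Type*} [Fintype m] [Fintype n] (A : Matrix m n ℝ)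

lemma transpose_mulVec_dotProduct (w : m → ℝ) (z : n → ℝ) :
    (Aᵀ *ᵥ w) ⬝ᵥ z = w ⬝ᵥ (A *ᵥ z) := by
  rw [dotProduct_mulVec, ← mulVec_transpose]

lemma mul_l2_le_l2_transpose_mulVec_mulVec {c : ℝ} {z : n → ℝ}
    (h : c * l2 z ^ 2 ≤ l2 (A *ᵥ z) ^ 2) : c * l2 z ≤ l2 (Aᵀ *ᵥ (A *ᵥ z)) := by
  rcases (l2_nonneg z).eq_or_lt with hz | hz
  · rw [← hz, mul_zero]
    exact l2_nonneg _
  refine le_of_mul_le_mul_right ?_ hz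
  calc c * l2 z * l2 z = c * l2 z ^ 2 := by ring
    _ ≤ (A *ᵥ z) ⬝ᵥ (A *ᵥ z) := by rwa [dotProduct_self_eq_l2_sq]
    _ = (Aᵀ *ᵥ (A *ᵥ z)) ⬝ᵥ z := (transpose_mulVec_dotProduct A _ z).symm
    _ ≤ l2 (Aᵀ *ᵥ (A *ᵥ z)) * l2 z := dotProduct_le_l2_mul_l2 _ _

lemma l2_mulVec_le_sqrt_mul {c : ℝ} {z : n → ℝ} (h : l2 (A *ᵥ z) ^ 2 ≤ c * l2 z ^ 2) :
    l2 (A *ᵥ z) ≤ √c * l2 z := by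
  simpa [Real.sqrt_sq (l2_nonneg _), Real.sqrt_mul' c (sq_nonneg (l2 z))]
    using Real.sqrt_le_sqrt h

lemma l2_transpose_mulVec_le {c : ℝ} (h : ∀ z, l2 (A *ᵥ z) ^ 2 ≤ c * l2 z ^ 2) (w : m → ℝ) :
    l2 (Aᵀ *ᵥ w) ≤ √c * l2 w := by
  set b := Aᵀ *ᵥ w
  rcases (l2_nonneg b).eq_or_lt with hb | hb
  · rw [← hb]
    exact mul_nonneg (Real.sqrt_nonneg c) (l2_nonneg w)
  refine le_of_mul_le_mul_right ?_ hb
  calc l2 b * l2 b = b ⬝ᵥ b := by rw [dotProduct_self_eq_l2_sq, sq]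
    _ = w ⬝ᵥ (A *ᵥ b) := transpose_mulVec_dotProduct A w b
    _ ≤ l2 w * l2 (A *ᵥ b) := dotProduct_le_l2_mul_l2 _ _
    _ ≤ l2 w * (√c * l2 b) := by gcongr; exacts [l2_nonneg w, l2_mulVec_le_sqrt_mul A (h b)]
    _ = √c * l2 w * l2 b := by ring

end transpose

section extendByZero

variable {ι : Type*} [DecidableEq ι]

def extendByZero (T : Finset ι) (z : T → ℝ) : ι → ℝ :=
  fun i => if h : i ∈ T then z ⟨i, h⟩ else 0

lemma sum_extendByZero [Fintype ι] (T : Finset ι) (z : T → ℝ) (g : ι → ℝ → ℝ)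
    (hg : ∀ i, g i 0 = 0) : ∑ i, g i (extendByZero T z i) = ∑ c : T, g c (z c) := by
  rw [← Finset.sum_subset (Finset.subset_univ T) fun i _ hi => by simp [extendByZero, hi, hg],
    ← Finset.sum_coe_sort T]
  simp [extendByZero]

lemma l2_extendByZero [Fintype ι] (T : Finset ι) (z : T → ℝ) :
    l2 (extendByZero T z) = l2 z := by
  rw [l2, l2, sum_extendByZero T z (fun _ t => t ^ 2) fun _ => zero_pow two_ne_zero]

end extendByZero

section RIP

variable {M N : ℕ}

lemma sparse_extendByZero {K : ℕ} {T : Finset (Fin N)} (hT : T.card ≤ K) (z : T → ℝ) :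
    Sparse K (extendByZero T z) := by
  refine (Finset.card_le_card fun i hi => ?_).trans hT
  by_contra hiT
  simp [extendByZero, hiT] at hi

lemma mulVec_extendByZero (Φ : Matrix (Fin M) (Fin N) ℝ) (T : Finset (Fin N)) (z : T → ℝ) :
    Φ *ᵥ extendByZero T z = colSub Φ T *ᵥ z := by
  funext r
  exact sum_extendByZero T z (fun j t => Φ r j * t) fun _ => mul_zero _

lemma extendByZero_restr {x : Fin N → ℝ} {T : Finset (Fin N)} (hx : ∀ i, i ∉ T → x i = 0) :
    extendByZero T (restr x T) = x := by
  funext i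
  by_cases hi : i ∈ T <;> simp [extendByZero, restr, hi, hx]

lemma RIP.colSub {Φ : Matrix (Fin M) (Fin N) ℝ} {K : ℕ} {δ : ℝ} (hΦ : RIP Φ K δ)
    {T : Finset (Fin N)} (hT : T.card ≤ K) (z : T → ℝ) :
    (1 - δ) * l2 z ^ 2 ≤ l2 (colSub Φ T *ᵥ z) ^ 2 ∧
      l2 (colSub Φ T *ᵥ z) ^ 2 ≤ (1 + δ) * l2 z ^ 2 := by
  simpa [l2_extendByZero, mulVec_extendByZero] using hΦ _ (sparse_extendByZero hT z)

end RIP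

theorem rho_lower_bound_general {M N K : ℕ} (Φ : Matrix (Fin M) (Fin N) ℝ)
    (x : Fin N → ℝ) (T : Finset (Fin N)) (v y : Fin M → ℝ)
    (hy : y = Φ.mulVec x + v) (hK : 1 ≤ K) (hT : T.card = K)
    (hsupp : ∀ i, i ∉ T → x i = 0)
    (δK : ℝ) (hRIPK : RIP Φ K δK) :
    ∃ j ∈ T,
      (1 / Real.sqrt K) *
          ((1 - δK) * l2 (restr x T) - Real.sqrt (1 + δK) * l2 v) ≤
        |(fun i => Φ i j) ⬝ᵥ y| := by
  set A := colSub Φ T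
  have hRIP := hRIPK.colSub hT.le
  have hy' : Aᵀ *ᵥ y = Aᵀ *ᵥ (A *ᵥ restr x T) + Aᵀ *ᵥ v := by
    rw [hy, ← mulVec_extendByZero, extendByZero_restr hsupp, mulVec_add]
  have hbound : (1 - δK) * l2 (restr x T) - √(1 + δK) * l2 v ≤ l2 (Aᵀ *ᵥ y) := by
    rw [hy']
    calc _ ≤ l2 (Aᵀ *ᵥ (A *ᵥ restr x T)) - l2 (Aᵀ *ᵥ v) :=
          sub_le_sub (mul_l2_le_l2_transpose_mulVec_mulVec A (hRIP _).1)
            (l2_transpose_mulVec_le A (fun z => (hRIP z).2) v)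
      _ ≤ _ := l2_sub_l2_le_l2_add _ _
  have : Nonempty T := (Finset.card_pos.mp (hT ▸ hK)).to_subtype
  obtain ⟨c, hc⟩ := exists_l2_le_sqrt_card_mul_abs (Aᵀ *ᵥ y)
  rw [Fintype.card_coe, hT] at hc
  refine ⟨c, c.2, ?_⟩
  rw [one_div, inv_mul_le_iff₀ (Real.sqrt_pos.mpr (by exact_mod_cast hK))]
  exact hbound.trans hc

theorem rho_lower_bound {M N K : ℕ} (Φ : Matrix (Fin M) (Fin N) ℝ)
    (x : Fin N → ℝ) (T : Finset (Fin N)) (v y : Fin M → ℝ)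
    (hy : y = Φ.mulVec x + v) (hK : 1 ≤ K) (hT : T.card = K)
    (hsupp : ∀ i, i ∉ T → x i = 0)
    (δK : ℝ) (hδK0 : 0 ≤ δK) (hδK1 : δK < 1) (hRIPK : RIP Φ K δK) :
    ∃ j ∈ T,
      (1 / Real.sqrt K) *
          ((1 - δK) * l2 (restr x T) - Real.sqrt (1 + δK) * l2 v) ≤
        |(fun i => Φ i j) ⬝ᵥ y| :=
  rho_lower_bound_general Φ x T v y hy hK hT hsupp δK hRIPK
end

section
/- Let y = Φx + v with x K-sparse with support T, and let I_L ⊆ T^c with |I_L| = L be the set of L indices outside T maximizing ‖Φ_I' y‖₂. Then η := min_{j ∈ I_L} |φ_j' y| satisfies η ≤ (1/√L)[δ_{L+K}‖x_T‖₂ + √(1+δ_L)‖v‖₂]. -/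
open Matrix Finset

lemma l2_nonneg_s8 {n : Type*} [Fintype n] (x : n → ℝ) : 0 ≤ l2 x := Real.sqrt_nonneg _

lemma l2_sq {n : Type*} [Fintype n] (x : n → ℝ) : l2 x ^ 2 = ∑ i, (x i) ^ 2 :=
  Real.sq_sqrt (Finset.sum_nonneg fun _ _ => sq_nonneg _)

lemma l2_smul {n : Type*} [Fintype n] {c : ℝ} (hc : 0 ≤ c) (x : n → ℝ) :
    l2 (c • x) = c * l2 x := by
  unfold l2
  simp only [Pi.smul_apply, smul_eq_mul, mul_pow, ← Finset.mul_sum]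
  rw [Real.sqrt_mul (sq_nonneg c), Real.sqrt_sq hc]

lemma l2_eq_zero {n : Type*} [Fintype n] {x : n → ℝ} (h : l2 x = 0) : x = 0 := by
  have h2 : ∑ i, (x i) ^ 2 = 0 := by rw [← l2_sq, h]; ring
  funext i
  have := (Finset.sum_eq_zero_iff_of_nonneg (fun i _ => sq_nonneg (x i))).1 h2 i (mem_univ i)
  exact (pow_eq_zero_iff two_ne_zero).1 this

lemma l2_cs {n : Type*} [Fintype n] (a b : n → ℝ) : ∑ i, a i * b i ≤ l2 a * l2 b := by
  calc ∑ i, a i * b i ≤ |∑ i, a i * b i| := le_abs_self _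
    _ = Real.sqrt ((∑ i, a i * b i) ^ 2) := (Real.sqrt_sq_eq_abs _).symm
    _ ≤ Real.sqrt ((∑ i, a i ^ 2) * (∑ i, b i ^ 2)) := by
        apply Real.sqrt_le_sqrt
        exact Finset.sum_mul_sq_le_sq_mul_sq Finset.univ a b
    _ = l2 a * l2 b := by
        rw [Real.sqrt_mul (Finset.sum_nonneg fun _ _ => sq_nonneg _)]; rfl

lemma l2_add_le {n : Type*} [Fintype n] (a b : n → ℝ) : l2 (a + b) ≤ l2 a + l2 b := by
  have hsq : l2 (a + b) ^ 2 ≤ (l2 a + l2 b) ^ 2 := by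
    rw [l2_sq]
    have h1 : ∑ i, ((a + b) i) ^ 2 = (∑ i, a i ^ 2) + 2 * (∑ i, a i * b i) + ∑ i, b i ^ 2 := by
      simp only [Pi.add_apply, Finset.mul_sum]
      rw [← Finset.sum_add_distrib, ← Finset.sum_add_distrib]
      exact Finset.sum_congr rfl fun i _ => by ring
    rw [h1]
    have h2 := l2_cs a b
    have := l2_sq a; have := l2_sq b
    nlinarith [l2_nonneg_s8 a, l2_nonneg_s8 b]
  calc l2 (a + b) = Real.sqrt (l2 (a + b) ^ 2) := (Real.sqrt_sq (l2_nonneg_s8 _)).symm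
    _ ≤ Real.sqrt ((l2 a + l2 b) ^ 2) := Real.sqrt_le_sqrt hsq
    _ = l2 a + l2 b := Real.sqrt_sq (add_nonneg (l2_nonneg_s8 a) (l2_nonneg_s8 b))

lemma sparse_of_support {N K' : ℕ} {z : Fin N → ℝ} {S : Finset (Fin N)}
    (hz : ∀ j ∉ S, z j = 0) (hS : S.card ≤ K') : Sparse K' z := by
  refine le_trans (Finset.card_le_card ?_) hS
  intro j hj
  simp only [Finset.mem_filter, Finset.mem_univ, true_and] at hj
  by_contra hjS
  exact hj (hz j hjS)

lemma dot_mulVec_eq {M N : ℕ} (Φ : Matrix (Fin M) (Fin N) ℝ) (u : Fin N → ℝ) (w : Fin M → ℝ) :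
    Φ.mulVec u ⬝ᵥ w = ∑ j, u j * ∑ i, Φ i j * w i := by
  unfold dotProduct Matrix.mulVec
  simp only [dotProduct, Finset.sum_mul, Finset.mul_sum]
  rw [Finset.sum_comm]
  exact Finset.sum_congr rfl fun j _ => Finset.sum_congr rfl fun i _ => by ring

lemma cross_half {M N K' : ℕ} {Φ : Matrix (Fin M) (Fin N) ℝ} {δ : ℝ}
    (hRIP : RIP Φ K' δ) (u w : Fin N → ℝ)
    (hdisj : ∀ j, u j * w j = 0)
    (hsum : Sparse K' (u + w)) (hdiff : Sparse K' (u - w)) :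
    Φ.mulVec u ⬝ᵥ Φ.mulVec w ≤ (δ / 2) * (l2 u ^ 2 + l2 w ^ 2) := by
  have key : l2 (Φ.mulVec (u + w)) ^ 2 - l2 (Φ.mulVec (u - w)) ^ 2
      = 4 * (Φ.mulVec u ⬝ᵥ Φ.mulVec w) := by
    rw [Matrix.mulVec_add, Matrix.mulVec_sub, l2_sq, l2_sq]
    unfold dotProduct
    rw [Finset.mul_sum, ← Finset.sum_sub_distrib]
    exact Finset.sum_congr rfl fun i _ => by simp only [Pi.add_apply, Pi.sub_apply]; ring
  have hplus : l2 (u + w) ^ 2 = l2 u ^ 2 + l2 w ^ 2 := by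
    rw [l2_sq, l2_sq, l2_sq, ← Finset.sum_add_distrib]
    exact Finset.sum_congr rfl fun i _ => by
      have h := hdisj i; simp only [Pi.add_apply]; linear_combination 2 * h
  have hminus : l2 (u - w) ^ 2 = l2 u ^ 2 + l2 w ^ 2 := by
    rw [l2_sq, l2_sq, l2_sq, ← Finset.sum_add_distrib]
    exact Finset.sum_congr rfl fun i _ => by
      have h := hdisj i; simp only [Pi.sub_apply]; linear_combination (-2) * h
  have hub := (hRIP (u + w) hsum).2
  have hlb := (hRIP (u - w) hdiff).1
  rw [hplus] at hub
  rw [hminus] at hlb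
  linarith

lemma cross {M N K' : ℕ} {Φ : Matrix (Fin M) (Fin N) ℝ} {δ : ℝ} (hδ0 : 0 ≤ δ)
    (hRIP : RIP Φ K' δ) (u w : Fin N → ℝ) {S1 S2 : Finset (Fin N)}
    (hS : Disjoint S1 S2) (hu : ∀ j ∉ S1, u j = 0) (hw : ∀ j ∉ S2, w j = 0)
    (hcard : S1.card + S2.card ≤ K') :
    Φ.mulVec u ⬝ᵥ Φ.mulVec w ≤ δ * (l2 u * l2 w) := by
  set a := l2 u with ha
  set b := l2 w with hb
  have ha0 : 0 ≤ a := l2_nonneg_s8 u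
  have hb0 : 0 ≤ b := l2_nonneg_s8 w
  have hdisj : ∀ j, u j * w j = 0 := by
    intro j
    by_cases hj : j ∈ S1
    · rw [hw j (Finset.disjoint_left.1 hS hj), mul_zero]
    · rw [hu j hj, zero_mul]
  have hcardU : (S1 ∪ S2).card ≤ K' :=
    le_trans (Finset.card_union_le S1 S2) hcard
  have hsupp : ∀ (c d : ℝ), ∀ j ∉ S1 ∪ S2, (c • u + d • w) j = 0 := by
    intro c d j hj
    rw [Finset.mem_union, not_or] at hj
    simp [hu j hj.1, hw j hj.2]
  have h1 : Φ.mulVec (b • u) ⬝ᵥ Φ.mulVec (a • w) ≤ (δ / 2) * (l2 (b • u) ^ 2 + l2 (a • w) ^ 2) := by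
    apply cross_half hRIP
    · intro j
      simp only [Pi.smul_apply, smul_eq_mul]
      linear_combination a * b * hdisj j
    · exact sparse_of_support (hsupp b a) hcardU
    · have : b • u - a • w = b • u + (-a) • w := by ext j; simp; ring
      rw [this]
      exact sparse_of_support (hsupp b (-a)) hcardU
  rw [Matrix.mulVec_smul, Matrix.mulVec_smul, smul_dotProduct, dotProduct_smul,
    l2_smul hb0, l2_smul ha0] at h1
  simp only [smul_eq_mul] at h1
  rcases eq_or_lt_of_le (mul_nonneg ha0 hb0) with hab | hab
  · have : u = 0 ∨ w = 0 := by
      rcases mul_eq_zero.1 hab.symm with h | h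
      · exact Or.inl (l2_eq_zero h)
      · exact Or.inr (l2_eq_zero h)
    rcases this with h | h <;> simp [h, ← hab, Matrix.mulVec_zero, dotProduct_zero,
      zero_dotProduct] <;> nlinarith
  · have h2 : (a * b) * (Φ.mulVec u ⬝ᵥ Φ.mulVec w) ≤ (a * b) * (δ * (a * b)) := by nlinarith
    exact le_of_mul_le_mul_left h2 hab

noncomputable def extv {N : ℕ} (S : Finset (Fin N)) (z : {i // i ∈ S} → ℝ) : Fin N → ℝ :=
  fun j => if h : j ∈ S then z ⟨j, h⟩ else 0

lemma extv_support {N : ℕ} (S : Finset (Fin N)) (z : {i // i ∈ S} → ℝ) :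
    ∀ j ∉ S, extv S z j = 0 := fun j hj => dif_neg hj

lemma l2_extv {N : ℕ} (S : Finset (Fin N)) (z : {i // i ∈ S} → ℝ) :
    l2 (extv S z) = l2 z := by
  unfold l2
  congr 1
  rw [← Finset.sum_subset (Finset.subset_univ S)
    (fun j _ hj => by rw [extv_support S z j hj]; ring)]
  rw [← Finset.sum_coe_sort S (fun j => (extv S z j) ^ 2)]
  exact Finset.sum_congr rfl fun c _ => by rw [extv, dif_pos c.2]

lemma extv_dot {M N : ℕ} (Φ : Matrix (Fin M) (Fin N) ℝ) (S : Finset (Fin N)) (w : Fin M → ℝ) :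
    Φ.mulVec (extv S ((colSub Φ S)ᵀ.mulVec w)) ⬝ᵥ w = l2 ((colSub Φ S)ᵀ.mulVec w) ^ 2 := by
  set z := (colSub Φ S)ᵀ.mulVec w with hz
  rw [dot_mulVec_eq, l2_sq]
  rw [← Finset.sum_subset (Finset.subset_univ S)
    (fun j _ hj => by rw [extv_support S z j hj]; ring)]
  rw [← Finset.sum_coe_sort S (fun j => extv S z j * ∑ i, Φ i j * w i)]
  refine Finset.sum_congr rfl fun c _ => ?_
  have h1 : extv S z c.1 = z c := by rw [extv, dif_pos c.2]
  have h2 : ∑ i, Φ i c.1 * w i = z c := by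
    simp [hz, Matrix.mulVec, dotProduct, colSub, Matrix.transpose_apply]
  rw [h1, h2]; ring

theorem eta_upper_bound {M N K L : ℕ} (Φ : Matrix (Fin M) (Fin N) ℝ)
    (x : Fin N → ℝ) (T : Finset (Fin N)) (v y : Fin M → ℝ)
    (hy : y = Φ.mulVec x + v) (hT : T.card = K) (hsupp : ∀ i, i ∉ T → x i = 0)
    (hL : 1 ≤ L) (IL : Finset (Fin N)) (hILT : Disjoint IL T) (hILcard : IL.card = L)
    (hmax : ∀ I' : Finset (Fin N), Disjoint I' T → I'.card = L →
      l2 ((colSub Φ I')ᵀ.mulVec y) ≤ l2 ((colSub Φ IL)ᵀ.mulVec y))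
    (δL δLK : ℝ) (hδL0 : 0 ≤ δL) (hδL1 : δL < 1) (hδLK0 : 0 ≤ δLK) (hδLK1 : δLK < 1)
    (hRIPL : RIP Φ L δL) (hRIPLK : RIP Φ (L + K) δLK) :
    ∃ j ∈ IL,
      |(fun i => Φ i j) ⬝ᵥ y| ≤
        (1 / Real.sqrt L) *
          (δLK * l2 (restr x T) + Real.sqrt (1 + δL) * l2 v) := by
  have hLpos : (0:ℝ) < Real.sqrt L :=
    Real.sqrt_pos.2 (by exact_mod_cast Nat.lt_of_lt_of_le Nat.zero_lt_one hL)
  have hne : IL.Nonempty := Finset.card_pos.1 (by omega)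
  set Q : Fin N → ℝ := fun j => (fun i => Φ i j) ⬝ᵥ y with hQ
  obtain ⟨j, hjIL, hmin⟩ := Finset.exists_min_image IL (fun i => |Q i|) hne
  refine ⟨j, hjIL, ?_⟩
  -- Step A : √L * |Q j| ≤ l2 (Φ_IL' y)
  have hentry : ∀ c : {i // i ∈ IL}, ((colSub Φ IL)ᵀ.mulVec y) c = Q c.1 := fun c => rfl
  have hA : Real.sqrt L * |Q j| ≤ l2 ((colSub Φ IL)ᵀ.mulVec y) := by
    have hsum : (L:ℝ) * (Q j)^2 ≤ ∑ c : {i // i ∈ IL}, (((colSub Φ IL)ᵀ.mulVec y) c)^2 := by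
      have e1 : ∑ c : {i // i ∈ IL}, (((colSub Φ IL)ᵀ.mulVec y) c)^2
          = ∑ i ∈ IL, Q i ^ 2 := by
        rw [← Finset.sum_coe_sort IL (fun i => Q i ^ 2)]
        exact Finset.sum_congr rfl fun c _ => by rw [hentry c]
      rw [e1]
      calc (L:ℝ) * Q j ^ 2 = ∑ _i ∈ IL, Q j ^ 2 := by
            rw [Finset.sum_const, hILcard, nsmul_eq_mul]
        _ ≤ ∑ i ∈ IL, Q i ^ 2 := by
            refine Finset.sum_le_sum fun i hi => ?_
            have h := hmin i hi
            calc Q j ^ 2 = |Q j| ^ 2 := (sq_abs _).symm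
              _ ≤ |Q i| ^ 2 := pow_le_pow_left₀ (abs_nonneg _) h 2
              _ = Q i ^ 2 := sq_abs _
    have h2 := Real.sqrt_le_sqrt hsum
    rwa [Real.sqrt_mul (Nat.cast_nonneg L), Real.sqrt_sq_eq_abs] at h2
  -- Step B: triangle
  set z1 := (colSub Φ IL)ᵀ.mulVec (Φ.mulVec x) with hz1
  set z2 := (colSub Φ IL)ᵀ.mulVec v with hz2
  have htri : l2 ((colSub Φ IL)ᵀ.mulVec y) ≤ l2 z1 + l2 z2 := by
    have e : (colSub Φ IL)ᵀ.mulVec y = z1 + z2 := by rw [hy, Matrix.mulVec_add]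
    rw [e]; exact l2_add_le _ _
  -- x and its restriction have the same norm
  have hxT : l2 x = l2 (restr x T) := by
    unfold l2; congr 1
    rw [← Finset.sum_subset (Finset.subset_univ T) (fun i _ hi => by rw [hsupp i hi]; ring)]
    rw [← Finset.sum_coe_sort T (fun i => x i ^ 2)]
    rfl
  -- Step C: signal term
  have hC : l2 z1 ≤ δLK * l2 (restr x T) := by
    have hdot : Φ.mulVec (extv IL z1) ⬝ᵥ Φ.mulVec x = l2 z1 ^ 2 := extv_dot Φ IL (Φ.mulVec x)
    have hcross := cross hδLK0 hRIPLK (extv IL z1) x hILT (extv_support IL z1)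
      (fun i hi => hsupp i hi) (by rw [hILcard, hT])
    rw [hdot, l2_extv, hxT] at hcross
    rcases eq_or_lt_of_le (l2_nonneg_s8 z1) with h0 | h0
    · rw [← h0]; exact mul_nonneg hδLK0 (l2_nonneg_s8 _)
    · have h2 : l2 z1 * l2 z1 ≤ (δLK * l2 (restr x T)) * l2 z1 := by nlinarith
      exact le_of_mul_le_mul_right h2 h0
  -- Step D: noise term
  have hD : l2 z2 ≤ Real.sqrt (1 + δL) * l2 v := by
    have hdot : Φ.mulVec (extv IL z2) ⬝ᵥ v = l2 z2 ^ 2 := extv_dot Φ IL v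
    have hsp : Sparse L (extv IL z2) :=
      sparse_of_support (extv_support IL z2) (le_of_eq hILcard)
    have hrip := (hRIPL _ hsp).2
    have hPu : l2 (Φ.mulVec (extv IL z2)) ≤ Real.sqrt (1 + δL) * l2 z2 := by
      calc l2 (Φ.mulVec (extv IL z2))
          = Real.sqrt (l2 (Φ.mulVec (extv IL z2)) ^ 2) := (Real.sqrt_sq (l2_nonneg_s8 _)).symm
        _ ≤ Real.sqrt ((1 + δL) * l2 (extv IL z2) ^ 2) := Real.sqrt_le_sqrt hrip
        _ = Real.sqrt (1 + δL) * l2 (extv IL z2) := by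
            rw [Real.sqrt_mul (by linarith), Real.sqrt_sq (l2_nonneg_s8 _)]
        _ = Real.sqrt (1 + δL) * l2 z2 := by rw [l2_extv]
    have hcs : Φ.mulVec (extv IL z2) ⬝ᵥ v ≤ l2 (Φ.mulVec (extv IL z2)) * l2 v := l2_cs _ _
    rw [hdot] at hcs
    have hkey : l2 z2 ^ 2 ≤ Real.sqrt (1 + δL) * l2 z2 * l2 v := by
      calc l2 z2 ^ 2 ≤ l2 (Φ.mulVec (extv IL z2)) * l2 v := hcs
        _ ≤ (Real.sqrt (1 + δL) * l2 z2) * l2 v :=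
            mul_le_mul_of_nonneg_right hPu (l2_nonneg_s8 v)
        _ = Real.sqrt (1 + δL) * l2 z2 * l2 v := by ring
    rcases eq_or_lt_of_le (l2_nonneg_s8 z2) with h0 | h0
    · rw [← h0]; exact mul_nonneg (Real.sqrt_nonneg _) (l2_nonneg_s8 _)
    · have h2 : l2 z2 * l2 z2 ≤ (Real.sqrt (1 + δL) * l2 v) * l2 z2 := by nlinarith
      exact le_of_mul_le_mul_right h2 h0
  -- combine
  have hchain : Real.sqrt L * |Q j| ≤ δLK * l2 (restr x T) + Real.sqrt (1 + δL) * l2 v :=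
    le_trans hA (le_trans htri (add_le_add hC hD))
  calc |Q j| = (1 / Real.sqrt L) * (Real.sqrt L * |Q j|) := by
        field_simp
    _ ≤ (1 / Real.sqrt L) * (δLK * l2 (restr x T) + Real.sqrt (1 + δL) * l2 v) :=
        mul_le_mul_of_nonneg_left hchain (by positivity)
end
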